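/- Under the FedOMD setting, the dynamic regret over T rounds satisfies Σ_{t=1}^T F^{(t)}(x^{(t)}) − Σ_{t=1}^T F^{(t)}(x^{(t),*}) ≤ √T·B_φ(x^*; x^{(1)}) + (μ²/2)·√T + 2·T·Δ_{[1,T]}. -/

import Mathlib

open Finset RealInnerProductSpace

/-!
Each client performs one mirror-descent step with step size `1/√T`. Its first-order optimality
condition together with the three-point identity for Bregman divergences bounds the local gap
`F_n(x_t) - F_n(u)` by `μ²/(2√T) + √T (B(u; x_t) - B(u; x_n^{(t+1)}))`, the quadratic term being
absorbed by `1`-strong convexity of `φ`. Convexity of `B(u; ·)` passes the bound to the aggregated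
iterate, and summing over rounds telescopes to the static regret bound against `x^*`.
By the drift bound every `F^{(t)}` is uniformly within `Δ_{[1,T]}` of `F^{(1)}`, so comparing
`x^*` with the minimizer of `F^{(1)}` costs at most `2 T Δ_{[1,T]}` against the per-round
minimizers.
-/

theorem ConvexOn.add_le_of_hasFDerivAt {E : Type*} [NormedAddCommGroup E] [NormedSpace ℝ E]
    {f : E → ℝ} {f' : E →L[ℝ] ℝ} {x : E} (hf : ConvexOn ℝ Set.univ f)
    (hf' : HasFDerivAt f f' x) (y : E) : f x + f' (y - x) ≤ f y := by
  have hline : ConvexOn ℝ Set.univ (f ∘ AffineMap.lineMap (k := ℝ) x y) := by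
    simpa using hf.comp_affineMap (AffineMap.lineMap x y : ℝ →ᵃ[ℝ] E)
  have hderiv : HasDerivAt (f ∘ AffineMap.lineMap (k := ℝ) x y) (f' (y - x)) 0 := by
    refine HasFDerivAt.comp_hasDerivAt (0 : ℝ) ?_ AffineMap.hasDerivAt_lineMap
    simpa using hf'
  have hslope := hline.le_slope_of_hasDerivAt (Set.mem_univ 0) (Set.mem_univ 1) one_pos hderiv
  simp only [slope_def_field, Function.comp_apply, AffineMap.lineMap_apply_one,
    AffineMap.lineMap_apply_zero, sub_zero, div_one] at hslope
  linarith

section Bregman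

variable {E : Type*} [NormedAddCommGroup E] [InnerProductSpace ℝ E]

def bregman (φ : E → ℝ) (Gφ : E → E) (y x : E) : ℝ := φ y - φ x - ⟪Gφ x, y - x⟫

variable {φ : E → ℝ} {Gφ : E → E}

theorem bregman_three_point (u x z : E) :
    bregman φ Gφ u x - bregman φ Gφ u z - bregman φ Gφ z x = ⟪Gφ z - Gφ x, u - z⟫ := by
  simp only [bregman, inner_sub_left, inner_sub_right]
  ring

theorem hasGradientAt_bregman_left [CompleteSpace E] (hφ : ∀ y, HasGradientAt φ (Gφ y) y)
    (x y : E) : HasGradientAt (fun z => bregman φ Gφ z x) (Gφ y - Gφ x) y := by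
  have hlin : HasFDerivAt (fun z => ⟪Gφ x, z - x⟫) (innerSL ℝ (Gφ x)) y := by
    simpa [inner_sub_right] using ((innerSL ℝ (Gφ x)).hasFDerivAt (x := y)).sub_const ⟪Gφ x, x⟫
  rw [hasGradientAt_iff_hasFDerivAt]
  refine (((hasGradientAt_iff_hasFDerivAt.mp (hφ y)).sub_const (φ x)).sub hlin).congr_fderiv ?_
  ext v
  simp

theorem add_smul_sub_eq_zero_of_forall_le [CompleteSpace E]
    (hφ : ∀ y, HasGradientAt φ (Gφ y) y) {g x x' : E} {c : ℝ}
    (hmin : ∀ y, ⟪g, x'⟫ + c * bregman φ Gφ x' x ≤ ⟪g, y⟫ + c * bregman φ Gφ y x) :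
    g + c • (Gφ x' - Gφ x) = 0 := by
  have hderiv : HasFDerivAt (fun y => ⟪g, y⟫ + c * bregman φ Gφ y x)
      (InnerProductSpace.toDual ℝ E (g + c • (Gφ x' - Gφ x))) x' := by
    refine ((innerSL ℝ g).hasFDerivAt.add ((hasGradientAt_iff_hasFDerivAt.mp
      (hasGradientAt_bregman_left hφ x x')).const_mul c)).congr_fderiv ?_
    ext v
    simp
  have hlocal : IsLocalMin (fun y => ⟪g, y⟫ + c * bregman φ Gφ y x) x' :=
    Filter.Eventually.of_forall hmin
  exact (InnerProductSpace.toDual ℝ E).map_eq_zero_iff.mp (hlocal.hasFDerivAt_eq_zero hderiv)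

theorem mirror_step_le [CompleteSpace E] {f : E → ℝ} {g x x' : E} {c μ : ℝ} (hc : 0 < c)
    (hf : ConvexOn ℝ Set.univ f) (hfg : HasGradientAt f g x) (hgμ : ‖g‖ ≤ μ)
    (hφ : ∀ y, HasGradientAt φ (Gφ y) y) (hsc : ∀ y z, ‖y - z‖ ^ 2 / 2 ≤ bregman φ Gφ y z)
    (hmin : ∀ y, ⟪g, x'⟫ + c * bregman φ Gφ x' x ≤ ⟪g, y⟫ + c * bregman φ Gφ y x) (u : E) :
    f x - f u ≤ μ ^ 2 / (2 * c) + c * (bregman φ Gφ u x - bregman φ Gφ u x') := by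
  have hlin : f x - f u ≤ ⟪g, x - u⟫ := by
    have hfirst := hf.add_le_of_hasFDerivAt (hasGradientAt_iff_hasFDerivAt.mp hfg) u
    rw [InnerProductSpace.toDual_apply_apply, ← neg_sub x u, inner_neg_right] at hfirst
    linarith
  have hopt : g = -(c • (Gφ x' - Gφ x)) := eq_neg_of_add_eq_zero_left
    (add_smul_sub_eq_zero_of_forall_le hφ hmin)
  have hthree : ⟪g, x' - u⟫ = c * (bregman φ Gφ u x - bregman φ Gφ u x' - bregman φ Gφ x' x) := by
    rw [bregman_three_point, hopt, inner_neg_left, real_inner_smul_left, ← neg_sub u x',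
      inner_neg_right]
    ring
  have hstep : ⟪g, x - x'⟫ - c * bregman φ Gφ x' x ≤ μ ^ 2 / (2 * c) := calc
    ⟪g, x - x'⟫ - c * bregman φ Gφ x' x ≤ μ * ‖x - x'‖ - c * (‖x - x'‖ ^ 2 / 2) := by
      gcongr
      · exact (real_inner_le_norm g _).trans (by gcongr)
      · rw [norm_sub_rev]; exact hsc x' x
    _ ≤ μ ^ 2 / (2 * c) := by
      rw [le_div_iff₀ (by positivity)]
      nlinarith [sq_nonneg (μ - c * ‖x - x'‖)]
  have hsplit : ⟪g, x - u⟫ = ⟪g, x - x'⟫ + ⟪g, x' - u⟫ := by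
    rw [← inner_add_right, sub_add_sub_cancel]
  linarith

theorem fedomd_round_le [CompleteSpace E] {ι : Type*} {N : Finset ι} {p : ι → ℝ}
    {f : ι → E → ℝ} {g x' : ι → E} {x u : E} {c μ : ℝ} (hc : 0 < c)
    (hf : ∀ n ∈ N, ConvexOn ℝ Set.univ (f n)) (hfg : ∀ n ∈ N, HasGradientAt (f n) (g n) x)
    (hgμ : ∀ n ∈ N, ‖g n‖ ≤ μ) (hφ : ∀ y, HasGradientAt φ (Gφ y) y)
    (hsc : ∀ y z, ‖y - z‖ ^ 2 / 2 ≤ bregman φ Gφ y z) (hp₀ : ∀ n ∈ N, 0 ≤ p n)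
    (hp₁ : ∑ n ∈ N, p n = 1)
    (hmin : ∀ n ∈ N, ∀ y,
      ⟪g n, x' n⟫ + c * bregman φ Gφ (x' n) x ≤ ⟪g n, y⟫ + c * bregman φ Gφ y x)
    (hjensen : bregman φ Gφ u (∑ n ∈ N, p n • x' n) ≤ ∑ n ∈ N, p n * bregman φ Gφ u (x' n)) :
    ∑ n ∈ N, p n * f n x - ∑ n ∈ N, p n * f n u ≤
      μ ^ 2 / (2 * c) + c * (bregman φ Gφ u x - bregman φ Gφ u (∑ n ∈ N, p n • x' n)) := calc
  ∑ n ∈ N, p n * f n x - ∑ n ∈ N, p n * f n u = ∑ n ∈ N, p n * (f n x - f n u) := by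
    simp only [mul_sub, sum_sub_distrib]
  _ ≤ ∑ n ∈ N, p n * (μ ^ 2 / (2 * c) + c * (bregman φ Gφ u x - bregman φ Gφ u (x' n))) :=
    sum_le_sum fun n hn => mul_le_mul_of_nonneg_left
      (mirror_step_le hc (hf n hn) (hfg n hn) (hgμ n hn) hφ hsc (hmin n hn) u) (hp₀ n hn)
  _ = μ ^ 2 / (2 * c) + c * (bregman φ Gφ u x - ∑ n ∈ N, p n * bregman φ Gφ u (x' n)) := by
    simp only [mul_add, mul_sub, sum_add_distrib, sum_sub_distrib, ← sum_mul, hp₁, one_mul,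
      mul_sum, mul_left_comm c]
  _ ≤ μ ^ 2 / (2 * c) + c * (bregman φ Gφ u x - bregman φ Gφ u (∑ n ∈ N, p n • x' n)) := by
    gcongr

end Bregman

theorem sum_Icc_le_of_le_add_mul_sub {a b : ℕ → ℝ} {C s : ℝ} {T : ℕ}
    (h : ∀ t ∈ Icc 1 T, a t ≤ C + s * (b t - b (t + 1))) :
    ∑ t ∈ Icc 1 T, a t ≤ T * C + s * (b 1 - b (T + 1)) := by
  induction T with
  | zero => simp
  | succ T ih =>
    rw [sum_Icc_succ_top (by omega)]
    have hprev := ih fun t ht => h t (Icc_subset_Icc_right (Nat.le_succ T) ht)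
    have hlast := h (T + 1) (right_mem_Icc.mpr (by omega))
    push_cast
    linarith

theorem abs_sub_le_sum_Icc_of_abs_sub_pred_le {f Δ : ℕ → ℝ} {T t : ℕ}
    (hΔ : ∀ r ∈ Icc 2 T, |f r - f (r - 1)| ≤ Δ r) (ht : t ∈ Icc 1 T) :
    |f t - f 1| ≤ ∑ r ∈ Icc 2 T, Δ r := by
  obtain ⟨ht1, htT⟩ := mem_Icc.mp ht
  have hpartial : |f t - f 1| ≤ ∑ r ∈ Icc 2 t, Δ r := by
    clear ht
    induction t, ht1 using Nat.le_induction with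
    | base => simp
    | succ t ht1 ih =>
      rw [sum_Icc_succ_top (by omega)]
      have hstep := hΔ (t + 1) (mem_Icc.mpr ⟨by omega, htT⟩)
      rw [Nat.add_sub_cancel] at hstep
      linarith [abs_sub_le (f (t + 1)) (f t) (f 1), ih (by omega)]
  exact hpartial.trans (sum_le_sum_of_subset_of_nonneg (Icc_subset_Icc_right htT)
    fun r hr _ => (abs_nonneg _).trans (hΔ r hr))

theorem sum_Icc_sub_sum_Icc_le_of_abs_sub_le {E : Type*} {f : ℕ → E → ℝ} {T : ℕ} {D : ℝ}
    {xs m : E} (z : ℕ → E) (hD : ∀ t ∈ Icc 1 T, ∀ y, |f t y - f 1 y| ≤ D)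
    (hm : ∀ y, f 1 m ≤ f 1 y) (hxs : ∑ t ∈ Icc 1 T, f t xs ≤ ∑ t ∈ Icc 1 T, f t m) :
    ∑ t ∈ Icc 1 T, f t xs - ∑ t ∈ Icc 1 T, f t (z t) ≤ 2 * T * D := by
  have hpoint : ∀ t ∈ Icc 1 T, f t m ≤ f t (z t) + 2 * D := fun t ht => by
    linarith [abs_le.mp (hD t ht m), abs_le.mp (hD t ht (z t)), hm (z t)]
  have hsum := sum_le_sum hpoint
  rw [sum_add_distrib, sum_const, Nat.card_Icc, Nat.add_sub_cancel, nsmul_eq_mul] at hsum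
  linarith

theorem jensen_finset_of_fin {ι E : Type*} [AddCommGroup E] [Module ℝ E] {f : E → ℝ}
    (hf : ∀ (j : ℕ) (z : Fin j → E) (w : Fin j → ℝ), (∀ i, 0 ≤ w i) → (∀ i, w i ≤ 1) →
      ∑ i, w i = 1 → f (∑ i, w i • z i) ≤ ∑ i, w i * f (z i))
    {s : Finset ι} {w : ι → ℝ} {z : ι → E} (hw₀ : ∀ i ∈ s, 0 ≤ w i) (hw₁ : ∑ i ∈ s, w i = 1) :
    f (∑ i ∈ s, w i • z i) ≤ ∑ i ∈ s, w i * f (z i) := by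
  have hw_le : ∀ i ∈ s, w i ≤ 1 := fun i hi => hw₁ ▸ single_le_sum hw₀ hi
  let e := s.equivFin.symm
  rw [← sum_coe_sort s, ← sum_coe_sort s, ← e.sum_comp, ← e.sum_comp]
  refine hf s.card (fun k => z (e k)) (fun k => w (e k)) (fun k => hw₀ _ (e k).2)
    (fun k => hw_le _ (e k).2) ?_
  rwa [e.sum_comp (fun i : s => w i), sum_coe_sort s w]

theorem fedomd_dynamic_regret_general
    {d : ℕ} {ι : Type*} (N : Finset ι) (T : ℕ) (hT : 1 ≤ T) (μ : ℝ)
    (F : ℕ → ι → EuclideanSpace ℝ (Fin d) → ℝ)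
    (G : ℕ → ι → EuclideanSpace ℝ (Fin d) → EuclideanSpace ℝ (Fin d))
    (p : ℕ → ι → ℝ)
    (Fg : ℕ → EuclideanSpace ℝ (Fin d) → ℝ)
    (Δ : ℕ → ℝ)
    (φ : EuclideanSpace ℝ (Fin d) → ℝ)
    (Gφ : EuclideanSpace ℝ (Fin d) → EuclideanSpace ℝ (Fin d))
    (B : EuclideanSpace ℝ (Fin d) → EuclideanSpace ℝ (Fin d) → ℝ)
    (x xstar : ℕ → EuclideanSpace ℝ (Fin d))
    (xloc : ℕ → ι → EuclideanSpace ℝ (Fin d))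
    (xs : EuclideanSpace ℝ (Fin d))
    (hconv : ∀ t ∈ Icc 1 T, ∀ n ∈ N, ConvexOn ℝ Set.univ (F t n))
    (hgrad : ∀ t ∈ Icc 1 T, ∀ n ∈ N, ∀ y, HasGradientAt (F t n) (G t n y) y)
    (hgradbd : ∀ t ∈ Icc 1 T, ∀ n ∈ N, ∀ y, ‖G t n y‖ ≤ μ)
    (hp0 : ∀ t ∈ Icc 1 T, ∀ n ∈ N, 0 ≤ p t n)
    (hpsum : ∀ t ∈ Icc 1 T, ∑ n ∈ N, p t n = 1)
    (hFg : ∀ t ∈ Icc 1 T, ∀ y, Fg t y = ∑ n ∈ N, p t n * F t n y)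
    (hΔ : ∀ t ∈ Icc 2 T, ∀ y, |Fg t y - Fg (t - 1) y| ≤ Δ t)
    (hφgrad : ∀ y, HasGradientAt φ (Gφ y) y)
    (hφsc : ∀ y z : EuclideanSpace ℝ (Fin d),
      φ z + ⟪Gφ z, y - z⟫ + (1 / 2) * ‖y - z‖ ^ 2 ≤ φ y)
    (hB : ∀ y z : EuclideanSpace ℝ (Fin d), B y z = φ y - φ z - ⟪Gφ z, y - z⟫)
    (hBjensen : ∀ (j : ℕ) (z : Fin j → EuclideanSpace ℝ (Fin d)) (w : Fin j → ℝ),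
      (∀ i, 0 ≤ w i) → (∀ i, w i ≤ 1) → ∑ i, w i = 1 →
      ∀ u, B u (∑ i, w i • z i) ≤ ∑ i, w i * B u (z i))
    (hlocmin : ∀ t ∈ Icc 1 T, ∀ n ∈ N, ∀ y,
      ⟪G t n (x t), xloc (t + 1) n⟫ + Real.sqrt T * B (xloc (t + 1) n) (x t) ≤
        ⟪G t n (x t), y⟫ + Real.sqrt T * B y (x t))
    (hagg : ∀ t ∈ Icc 1 T, x (t + 1) = ∑ n ∈ N, p t n • xloc (t + 1) n)
    (hxstar : ∀ t ∈ Icc 1 T, ∀ y, Fg t (xstar t) ≤ Fg t y)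
    (hxs : ∀ y, ∑ t ∈ Icc 1 T, Fg t xs ≤ ∑ t ∈ Icc 1 T, Fg t y) :
    ∑ t ∈ Icc 1 T, Fg t (x t) - ∑ t ∈ Icc 1 T, Fg t (xstar t) ≤
      Real.sqrt T * B xs (x 1) + μ ^ 2 / 2 * Real.sqrt T
        + 2 * T * ∑ t ∈ Icc 2 T, Δ t := by
  obtain rfl : B = bregman φ Gφ := funext fun y => funext (hB y)
  have hsc : ∀ y z, ‖y - z‖ ^ 2 / 2 ≤ bregman φ Gφ y z := fun y z => by
    rw [bregman]; linarith [hφsc y z]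
  have hs : 0 < √(T : ℝ) := Real.sqrt_pos.mpr (by exact_mod_cast hT)
  have hround : ∀ t ∈ Icc 1 T, Fg t (x t) - Fg t xs ≤ μ ^ 2 / (2 * √(T : ℝ)) +
      √(T : ℝ) * (bregman φ Gφ xs (x t) - bregman φ Gφ xs (x (t + 1))) := fun t ht => by
    rw [hFg t ht, hFg t ht, hagg t ht]
    exact fedomd_round_le hs (hconv t ht) (fun n hn => hgrad t ht n hn _)
      (fun n hn => hgradbd t ht n hn _) hφgrad hsc (hp0 t ht) (hpsum t ht) (hlocmin t ht)
      (jensen_finset_of_fin (fun j z w h₀ h₁ h => hBjensen j z w h₀ h₁ h xs) (hp0 t ht)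
        (hpsum t ht))
  have hstatic := sum_Icc_le_of_le_add_mul_sub hround
  have hdynamic := sum_Icc_sub_sum_Icc_le_of_abs_sub_le (f := Fg) xstar
    (fun t ht y => abs_sub_le_sum_Icc_of_abs_sub_pred_le (f := fun r => Fg r y)
      (fun r hr => hΔ r hr y) ht)
    (hxstar 1 (left_mem_Icc.mpr hT)) (hxs _)
  have hT_mul : (T : ℝ) * (μ ^ 2 / (2 * √(T : ℝ))) = μ ^ 2 / 2 * √(T : ℝ) := by
    nth_rewrite 1 [← Real.sq_sqrt (Nat.cast_nonneg T)]
    field_simp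
  have hfinal_nonneg : 0 ≤ √(T : ℝ) * bregman φ Gφ xs (x (T + 1)) :=
    mul_nonneg hs.le ((by positivity : (0 : ℝ) ≤ _).trans (hsc _ _))
  rw [sum_sub_distrib] at hstatic
  linarith

/-- **FedOMD dynamic regret bound.**
Under the FedOMD setting (convex, differentiable local losses with `μ`-bounded gradients,
convex-combination weights summing to one, a differentiable `1`-strongly convex mirror map `φ`
whose Bregman divergence is jointly convex in its second argument in the stated averaged sense,
local mirror-descent updates with learning rate `1/√T` followed by weighted aggregation,
and concept drift `Δ_t` bounding the pointwise change of the global loss between consecutive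
rounds), the dynamic regret over `T` rounds satisfies
`Σ_{t=1}^T F^{(t)}(x^{(t)}) − Σ_{t=1}^T F^{(t)}(x^{(t),*})
  ≤ √T·B_φ(x^*; x^{(1)}) + (μ²/2)·√T + 2·T·Δ_{[1,T]}`. -/
theorem fedomd_dynamic_regret
    {d : ℕ} {ι : Type*} (N : Finset ι) (T : ℕ) (hT : 1 ≤ T) (μ : ℝ) (hμ : 0 ≤ μ)
    (F : ℕ → ι → EuclideanSpace ℝ (Fin d) → ℝ)
    (G : ℕ → ι → EuclideanSpace ℝ (Fin d) → EuclideanSpace ℝ (Fin d))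
    (p : ℕ → ι → ℝ)
    (Fg : ℕ → EuclideanSpace ℝ (Fin d) → ℝ)
    (Δ : ℕ → ℝ)
    (φ : EuclideanSpace ℝ (Fin d) → ℝ)
    (Gφ : EuclideanSpace ℝ (Fin d) → EuclideanSpace ℝ (Fin d))
    (B : EuclideanSpace ℝ (Fin d) → EuclideanSpace ℝ (Fin d) → ℝ)
    (x xstar : ℕ → EuclideanSpace ℝ (Fin d))
    (xloc : ℕ → ι → EuclideanSpace ℝ (Fin d))
    (xs : EuclideanSpace ℝ (Fin d))
    (hconv : ∀ t ∈ Icc 1 T, ∀ n ∈ N, ConvexOn ℝ Set.univ (F t n))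
    (hgrad : ∀ t ∈ Icc 1 T, ∀ n ∈ N, ∀ y, HasGradientAt (F t n) (G t n y) y)
    (hgradbd : ∀ t ∈ Icc 1 T, ∀ n ∈ N, ∀ y, ‖G t n y‖ ≤ μ)
    (hp0 : ∀ t ∈ Icc 1 T, ∀ n ∈ N, 0 ≤ p t n)
    (hp1 : ∀ t ∈ Icc 1 T, ∀ n ∈ N, p t n ≤ 1)
    (hpsum : ∀ t ∈ Icc 1 T, ∑ n ∈ N, p t n = 1)
    (hFg : ∀ t ∈ Icc 1 T, ∀ y, Fg t y = ∑ n ∈ N, p t n * F t n y)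
    (hΔ0 : ∀ t ∈ Icc 2 T, 0 ≤ Δ t)
    (hΔ : ∀ t ∈ Icc 2 T, ∀ y, |Fg t y - Fg (t - 1) y| ≤ Δ t)
    (hφgrad : ∀ y, HasGradientAt φ (Gφ y) y)
    (hφsc : ∀ y z : EuclideanSpace ℝ (Fin d),
      φ z + ⟪Gφ z, y - z⟫ + (1 / 2) * ‖y - z‖ ^ 2 ≤ φ y)
    (hB : ∀ y z : EuclideanSpace ℝ (Fin d), B y z = φ y - φ z - ⟪Gφ z, y - z⟫)
    (hBjensen : ∀ (j : ℕ) (z : Fin j → EuclideanSpace ℝ (Fin d)) (w : Fin j → ℝ),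
      (∀ i, 0 ≤ w i) → (∀ i, w i ≤ 1) → ∑ i, w i = 1 →
      ∀ u, B u (∑ i, w i • z i) ≤ ∑ i, w i * B u (z i))
    (hlocmin : ∀ t ∈ Icc 1 T, ∀ n ∈ N, ∀ y,
      ⟪G t n (x t), xloc (t + 1) n⟫ + Real.sqrt T * B (xloc (t + 1) n) (x t) ≤
        ⟪G t n (x t), y⟫ + Real.sqrt T * B y (x t))
    (hagg : ∀ t ∈ Icc 1 T, x (t + 1) = ∑ n ∈ N, p t n • xloc (t + 1) n)
    (hxstar : ∀ t ∈ Icc 1 T, ∀ y, Fg t (xstar t) ≤ Fg t y)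
    (hxs : ∀ y, ∑ t ∈ Icc 1 T, Fg t xs ≤ ∑ t ∈ Icc 1 T, Fg t y) :
    ∑ t ∈ Icc 1 T, Fg t (x t) - ∑ t ∈ Icc 1 T, Fg t (xstar t) ≤
      Real.sqrt T * B xs (x 1) + μ ^ 2 / 2 * Real.sqrt T
        + 2 * T * ∑ t ∈ Icc 2 T, Δ t :=
  fedomd_dynamic_regret_general N T hT μ F G p Fg Δ φ Gφ B x xstar xloc xs hconv hgrad hgradbd hp0
    hpsum hFg hΔ hφgrad hφsc hB hBjensen hlocmin hagg hxstar hxs
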